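/- In the Game of Privacy, if Carol learns Alice's secret bit a and Alice plays the strategy a?T:B (play T if a=1, B if a=0), then Carol has a response (a?L:R) yielding her payoff 8, strictly greater than her equilibrium expected payoff of 4; consequently the profile where Alice randomizes using a known bit is not a Nash equilibrium, and Alice's unique remaining pure Nash equilibrium payoff is 2, so keeping the secret (payoff 4) strictly dominates sharing it (payoff 2). -/

import Mathlib

/- Payoffs are averages over a of the stage payoffs, and a strategy may be changed at a single
value of a, so the public-secret game is two independent copies of the 3×3 game; its only pure
equilibrium is (M, C), where Alice gets 2. -/

inductive ACh | T | M | B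
  deriving DecidableEq
instance : Fintype ACh := ⟨{.T, .M, .B}, fun x => by cases x <;> simp⟩
inductive CCh | L | Cc | R
  deriving DecidableEq
instance : Fintype CCh := ⟨{.L, .Cc, .R}, fun x => by cases x <;> simp⟩

def gA : ACh → CCh → ℚ
  | .T, .L => 0
  | .T, .Cc => 0
  | .T, .R => 8
  | .M, .L => 2
  | .M, .Cc => 2
  | .M, .R => 2
  | .B, .L => 8
  | .B, .Cc => 0
  | .B, .R => 0

def gC : ACh → CCh → ℚ
  | .T, .L => 8
  | .T, .Cc => 2
  | .T, .R => 0
  | .M, .L => 0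
  | .M, .Cc => 2
  | .M, .R => 0
  | .B, .L => 0
  | .B, .Cc => 2
  | .B, .R => 8

/-- Strategies when Alice's secret bit a is known to both players. -/
def EA (sA : Bool → ACh) (sC : Bool → CCh) : ℚ :=
  (∑ a : Bool, gA (sA a) (sC a)) / 2
def EC (sA : Bool → ACh) (sC : Bool → CCh) : ℚ :=
  (∑ a : Bool, gC (sA a) (sC a)) / 2

def Nash (sA : Bool → ACh) (sC : Bool → CCh) : Prop :=
  (∀ sA' : Bool → ACh, EA sA' sC ≤ EA sA sC) ∧
  (∀ sC' : Bool → CCh, EC sA sC' ≤ EC sA sC)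

def aTB : Bool → ACh := fun a => if a then .T else .B
def aLR : Bool → CCh := fun a => if a then .L else .R

theorem forall_sum_le_sum_iff {σ α M : Type*} [Fintype σ] [DecidableEq σ] [AddCommMonoid M]
    [PartialOrder M] [IsOrderedCancelAddMonoid M] (f : σ → α → M) (s : σ → α) :
    (∀ s' : σ → α, ∑ i, f i (s' i) ≤ ∑ i, f i (s i)) ↔ ∀ i x, f i x ≤ f i (s i) := by
  refine ⟨fun h i x => ?_, fun h s' => Finset.sum_le_sum fun i _ => h i (s' i)⟩
  have hi := h (Function.update s i x)
  rw [← Finset.add_sum_erase _ _ (Finset.mem_univ i), ← Finset.add_sum_erase _ _ (Finset.mem_univ i),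
    Finset.sum_congr rfl fun j hj => by rw [Function.update_of_ne (Finset.ne_of_mem_erase hj)]] at hi
  simpa using le_of_add_le_add_right hi

def IsPureNash (x : ACh) (y : CCh) : Prop :=
  (∀ x', gA x' y ≤ gA x y) ∧ (∀ y', gC x y' ≤ gC x y)

instance (x : ACh) (y : CCh) : Decidable (IsPureNash x y) := by
  unfold IsPureNash; infer_instance

theorem isPureNash_iff (x : ACh) (y : CCh) : IsPureNash x y ↔ x = .M ∧ y = .Cc := by
  revert x y; decide

theorem nash_iff_forall_isPureNash (sA : Bool → ACh) (sC : Bool → CCh) :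
    Nash sA sC ↔ ∀ a, IsPureNash (sA a) (sC a) := by
  simp only [Nash, EA, EC, div_le_div_iff_of_pos_right (two_pos : (0 : ℚ) < 2),
    forall_sum_le_sum_iff (fun a x => gA x (sC a)), forall_sum_le_sum_iff (fun a y => gC (sA a) y),
    IsPureNash, forall_and]

theorem nash_iff (sA : Bool → ACh) (sC : Bool → CCh) :
    Nash sA sC ↔ sA = (fun _ => .M) ∧ sC = (fun _ => .Cc) := by
  simp only [nash_iff_forall_isPureNash, isPureNash_iff, forall_and, funext_iff]

/-- If Carol knows a and Alice plays a?T:B then Carol's response a?L:R pays her 8 > 4;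
no profile with Alice playing a?T:B is Nash; every Nash equilibrium of the public-secret
game pays Alice 2, so keeping the secret (4) strictly dominates sharing it (2). -/
theorem privacy_secrecy_dominant :
    EC aTB aLR = 8 ∧ (4 : ℚ) < 8 ∧
    (∀ sC : Bool → CCh, ¬ Nash aTB sC) ∧
    (∀ sA sC, Nash sA sC → EA sA sC = 2) ∧ (2 : ℚ) < 4 := by
  refine ⟨by norm_num [EC, aTB, aLR, gC], by norm_num, fun sC h => ?_, fun sA sC h => ?_, by norm_num⟩
  · have hT : aTB true = .M := congrFun ((nash_iff _ _).1 h).1 true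
    exact absurd hT (by decide)
  · obtain ⟨rfl, rfl⟩ := (nash_iff _ _).1 h
    norm_num [EA, gA]
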